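/- arXiv:1811.10530 — 3 statements merged into one kernel-verified Lean document; each statement's English description precedes it below -/
import Mathlib

section
/- Let λ_1, …, λ_r be positive integers and k ≥ 1. Let T = ∏_{i=1}^r Perm(Fin λ_i), and for g = (g_1,…,g_r) ∈ T set α_k(g) = ∑_{i=1}^r α_k(g_i) and α(g) = ∑_{i=1}^r α(g_i). Then ∑_{g∈T} α_k(g)·2^{α(g)} = 2·(k−1)! · ∑_{i : λ_i ≥ k} C(λ_i,k) · (λ_i−k+1)! · ∏_{j≠i} (λ_j+1)!. -/
/-- `αₖ(π)`: the number of cycles of length `k` of the permutation `π`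
(fixed points count as cycles of length 1). -/
def cycCount {m : ℕ} (k : ℕ) (π : Equiv.Perm (Fin m)) : ℕ :=
  if k = 1 then (Finset.univ.filter fun x => π x = x).card
  else Multiset.count k π.cycleType

/-- `α(π)`: the total number of cycles of `π` (fixed points included). -/
def cycTotal {m : ℕ} (π : Equiv.Perm (Fin m)) : ℕ :=
  Multiset.card π.cycleType + (Finset.univ.filter fun x => π x = x).card

/-!
Write `N(π)` for the number of cycles of `π ∈ Perm α`, `n = |α|`. The number `2 ^ N(π)` counts
the two-colourings `f : α → Bool` that are constant on the cycles of `π`; exchanging the two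
sums, a colouring with `j` points of the first colour is preserved by `j! (n - j)!`
permutations, so `∑_π 2 ^ N(π) = ∑_j C(n, j) j! (n - j)! = (n + 1)!`.

The permutations containing a given `k`-cycle `c` (for `k = 1`: fixing a given point) are
exactly `c` glued to an arbitrary permutation `ρ` of the other `n - k` points, and then
`N(π) = N(ρ) + 1`. Counting each such `π` once per `k`-cycle it contains, and using that there
are `(k - 1)! C(n, k)` cycles of length `k`, gives
`∑_π αₖ(π) 2 ^ N(π) = (k - 1)! C(n, k) · 2 (n - k + 1)!`.

On a product of symmetric groups both `αₖ` and `N` are additive, so the sum splits into one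
term for each factor `i`, in which factor `i` contributes the previous sum and every other
factor `j` contributes `(λⱼ + 1)!`.
-/

open Finset Nat

theorem sum_card_filter_mul_eq_sum_sum_filter {ι κ : Type*} [Fintype ι] (t : Finset κ)
    (R : ι → κ → Prop) [∀ i c, Decidable (R i c)] (w : ι → ℕ) :
    ∑ i, #{c ∈ t | R i c} * w i = ∑ c ∈ t, ∑ i with R i c, w i := by
  simp_rw [card_eq_sum_ones, sum_mul, one_mul]
  exact sum_sum_bipartiteAbove_eq_sum_sum_bipartiteBelow _ _

theorem sum_pi_sum_mul_prod {ι R : Type*} [Fintype ι] [DecidableEq ι] [CommSemiring R]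
    {β : ι → Type*} [∀ i, Fintype (β i)] (a w : ∀ i, β i → R) :
    ∑ g : ∀ i, β i, (∑ i, a i (g i)) * ∏ i, w i (g i) =
      ∑ i, (∑ b, a i b * w i b) * ∏ j ∈ univ.erase i, ∑ b, w j b := by
  simp_rw [sum_mul (s := univ) (f := fun i => a i _)]
  rw [sum_comm]
  refine sum_congr rfl fun i _ => ?_
  have hsingle (g : ∀ i, β i) : a i (g i) * ∏ j, w j (g j) =
      ∏ j, (if j = i then a j (g j) else 1) * w j (g j) := by
    rw [prod_mul_distrib, prod_ite_eq' univ i, if_pos (mem_univ i)]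
  simp_rw [hsingle]
  rw [← Fintype.prod_sum fun j b => (if j = i then a j b else 1) * w j b,
    ← mul_prod_erase univ _ (mem_univ i)]
  simp only [↓reduceIte]
  refine congr_arg _ (prod_congr rfl fun j hj => ?_)
  simp [(mem_erase.1 hj).1]

def Finset.equivBoolFun {α : Type*} [Fintype α] [DecidableEq α] : Finset α ≃ (α → Bool) where
  toFun s x := x ∈ s
  invFun f := {x | f x}
  left_inv s := by ext; simp
  right_inv f := by ext; simp

namespace Equiv.Perm

theorem comp_eq_self_iff_forall_sameCycle {α β : Type*} [Finite α] (σ : Perm α) (f : α → β) :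
    f ∘ σ = f ↔ ∀ x y, σ.SameCycle x y → f x = f y := by
  refine ⟨fun hf x y hxy => ?_,
    fun hf => funext fun x => hf _ _ (sameCycle_apply_left.2 (.refl σ x))⟩
  obtain ⟨n, -, rfl⟩ := hxy.exists_nat_pow_eq
  clear hxy
  induction n with
  | zero => rfl
  | succ n ih => rwa [_root_.pow_succ', mul_apply, ← Function.comp_apply (f := f), hf]

theorem exists_subtypeCongr_eq_iff {α : Type*} {p : α → Prop} [DecidablePred p]
    {a : Perm {x // p x}} {π : Perm α} :
    (∃ b : Perm {x // ¬p x}, a.subtypeCongr b = π) ↔ ∀ x (hx : p x), π x = a ⟨x, hx⟩ := by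
  refine ⟨fun ⟨b, hb⟩ x hx => hb ▸ subtypeCongr.left_apply _ _ hx, fun h => ?_⟩
  have hp (x : α) : p (π x) ↔ p x := by
    refine ⟨fun hπx => ?_, fun hx => h x hx ▸ (a _).2⟩
    set y := a.symm ⟨π x, hπx⟩
    have hy : π y = π x := by rw [h y y.2]; simp [y]
    exact π.injective hy ▸ y.2
  refine ⟨π.subtypePerm fun x => not_congr (hp x), ext fun x => ?_⟩
  by_cases hx : p x
  · rw [subtypeCongr.left_apply _ _ hx, h x hx]
  · rw [subtypeCongr.right_apply _ _ hx, subtypePerm_apply]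

variable {α : Type*} [Fintype α] [DecidableEq α]

def numCycles (σ : Perm α) : ℕ :=
  Multiset.card σ.cycleType + #{x | σ x = x}

theorem numCycles_subtypeCongr {p : α → Prop} [DecidablePred p] (a : Perm {x // p x})
    (b : Perm {x // ¬p x}) : (a.subtypeCongr b).numCycles = a.numCycles + b.numCycles := by
  have hmul : a.subtypeCongr b = ofSubtype a * ofSubtype b := by
    ext x
    by_cases hx : p x
    · simp [subtypeCongr.left_apply _ _ hx, ofSubtype_apply_of_mem a hx,
        ofSubtype_apply_of_not_mem b (not_not.2 hx)]
    · simp [subtypeCongr.right_apply _ _ hx, ofSubtype_apply_of_mem b hx,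
        ofSubtype_apply_of_not_mem a (b ⟨x, hx⟩).2]
  have hdisj : (ofSubtype a).Disjoint (ofSubtype b) := fun x => by
    by_cases hx : p x
    · exact .inr (ofSubtype_apply_of_not_mem b (not_not.2 hx))
    · exact .inl (ofSubtype_apply_of_not_mem a hx)
  have hfix : #{x | a.subtypeCongr b x = x} = #{y | a y = y} + #{y | b y = y} := by
    simp only [card_filter, ← Fintype.sum_subtype_add_sum_subtype p, Subtype.ext_iff,
      subtypeCongr.left_apply_subtype, subtypeCongr.right_apply_subtype]
  rw [numCycles, numCycles, numCycles, hfix, hmul, hdisj.cycleType_mul, cycleType_ofSubtype,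
    cycleType_ofSubtype, Multiset.card_add]
  ring

def cycleClass (σ : Perm α) (x : α) : σ.cycleFactorsFinset ⊕ {x // σ x = x} :=
  if h : σ x = x then .inr ⟨x, h⟩
  else .inl ⟨σ.cycleOf x, cycleOf_mem_cycleFactorsFinset_iff.2 (mem_support.2 h)⟩

theorem cycleClass_eq_iff {σ : Perm α} {x y : α} :
    σ.cycleClass x = σ.cycleClass y ↔ σ.SameCycle x y := by
  by_cases hx : σ x = x <;> by_cases hy : σ y = y <;>
    simp only [cycleClass, hx, hy, dite_true, dite_false, reduceCtorEq, false_iff,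
      Sum.inl.injEq, Sum.inr.injEq, Subtype.mk.injEq]
  · exact ⟨fun h => h ▸ SameCycle.refl σ x, fun h => h.eq_of_left hx⟩
  · exact fun h => hy (h.eq_of_left hx ▸ hx)
  · exact fun h => hx (h.symm.eq_of_left hy ▸ hy)
  · refine ⟨fun h => ?_, SameCycle.cycleOf_eq⟩
    rw [← mem_support_cycleOf_iff' hx, h, mem_support_cycleOf_iff' hy]

theorem cycleClass_surjective (σ : Perm α) : Function.Surjective σ.cycleClass := by
  rintro (⟨c, hc⟩ | ⟨x, hx⟩)
  · obtain ⟨x, hx⟩ := (mem_cycleFactorsFinset_iff.1 hc).1.nonempty_support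
    have hσx : σ x ≠ x := mem_support.1 (mem_cycleFactorsFinset_support_le hc hx)
    exact ⟨x, by simp [cycleClass, hσx, cycle_is_cycleOf hx hc]⟩
  · exact ⟨x, by simp [cycleClass, hx]⟩

theorem card_bool_fun_comp_eq_self (σ : Perm α) :
    Fintype.card {f : α → Bool // f ∘ σ = f} = 2 ^ σ.numCycles := by
  have hrange (f : α → Bool) : f ∘ σ = f ↔ f ∈ Set.range (· ∘ σ.cycleClass) := by
    rw [comp_eq_self_iff_forall_sameCycle]
    refine ⟨fun hf => ⟨f ∘ Function.surjInv σ.cycleClass_surjective, funext fun x => ?_⟩, ?_⟩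
    · exact hf _ _ (cycleClass_eq_iff.1 (Function.surjInv_eq _ _))
    · rintro ⟨g, rfl⟩ x y hxy
      simp [cycleClass_eq_iff.2 hxy]
  rw [Fintype.card_congr (Equiv.subtypeEquivRight hrange),
    Set.card_range_of_injective σ.cycleClass_surjective.injective_comp_right, Fintype.card_fun,
    Fintype.card_bool, Fintype.card_sum, Fintype.card_coe, Fintype.card_subtype, numCycles,
    cycleType_def, Multiset.card_map]
  rfl

theorem sum_two_pow_numCycles : ∑ σ : Perm α, 2 ^ σ.numCycles = (Fintype.card α + 1)! := by
  set n := Fintype.card α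
  have hstab (s : Finset α) :
      #{σ : Perm α | Finset.equivBoolFun s ∘ σ = Finset.equivBoolFun s} = (#s)! * (n - #s)! := by
    have hs : Fintype.card {x // Finset.equivBoolFun s x = true} = #s := by
      simp [Finset.equivBoolFun, Fintype.card_subtype]
    rw [← Fintype.card_subtype, DomMulAct.stabilizer_card, Fintype.prod_bool, ← hs,
      ← Fintype.card_subtype_compl]
    simp only [Bool.not_eq_true]
  calc ∑ σ : Perm α, 2 ^ σ.numCycles
      = ∑ σ : Perm α, #{f : α → Bool | f ∘ σ = f} := by
        simp_rw [← card_bool_fun_comp_eq_self, Fintype.card_subtype]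
    _ = ∑ f : α → Bool, #{σ : Perm α | f ∘ σ = f} :=
        sum_card_bipartiteAbove_eq_sum_card_bipartiteBelow _
    _ = ∑ s : Finset α, (#s)! * (n - #s)! :=
        Fintype.sum_equiv Finset.equivBoolFun.symm _ _ fun f => by
          simpa using hstab (Finset.equivBoolFun.symm f)
    _ = ∑ j ∈ range (n + 1), n.choose j * (j ! * (n - j)!) := by
        simpa using (sum_powerset_apply_card (fun j => j ! * (n - j)!) (x := (univ : Finset α)))
    _ = ∑ j ∈ range (n + 1), n ! :=
        sum_congr rfl fun j hj => by
          rw [← mul_assoc, choose_mul_factorial_mul_factorial (Nat.lt_succ_iff.1 (mem_range.1 hj))]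
    _ = (n + 1)! := by rw [sum_const, card_range, smul_eq_mul, factorial_succ]

theorem sum_two_pow_numCycles_filter {p : α → Prop} [DecidablePred p] (a : Perm {x // p x})
    (P : Perm α → Prop) [DecidablePred P] (hP : ∀ π, P π ↔ ∀ x (hx : p x), π x = a ⟨x, hx⟩) :
    ∑ π with P π, 2 ^ π.numCycles = 2 ^ a.numCycles * (Fintype.card {x // ¬p x} + 1)! := by
  have himage : ({π | P π} : Finset (Perm α)) = univ.image a.subtypeCongr := by
    ext π
    simp [hP, ← exists_subtypeCongr_eq_iff]
  have hinj : Function.Injective a.subtypeCongr := fun b b' h =>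
    ext fun y => Subtype.ext (by simpa using congr($h y))
  rw [himage, sum_image fun b _ b' _ h => hinj h]
  simp_rw [numCycles_subtypeCongr, pow_add, ← mul_sum, sum_two_pow_numCycles]

theorem sum_two_pow_numCycles_filter_apply_eq_self (x : α) :
    ∑ π : Perm α with π x = x, 2 ^ π.numCycles = 2 * (Fintype.card α - 1 + 1)! := by
  rw [sum_two_pow_numCycles_filter (p := (· = x)) 1 (fun π => π x = x)
    fun π => ⟨fun h y hy => hy ▸ h, fun h => h x rfl⟩]
  simp [numCycles, Fintype.card_subtype_compl]

/- The restriction of `c` to its support lives on `{x // c x ≠ x}` rather than on `c.support`: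
the `Fintype` instance of the coerced finset is not the one `sum_two_pow_numCycles_filter` uses. -/
theorem IsCycle.numCycles_subtypePerm {c : Perm α} (hc : c.IsCycle) :
    (c.subtypePerm (p := fun x => c x ≠ x) fun _ => c.injective.ne_iff).numCycles = 1 := by
  set a : Perm {x // c x ≠ x} := c.subtypePerm fun _ => c.injective.ne_iff
  have hcycleType : a.cycleType = c.cycleType := by
    rw [← cycleType_ofSubtype, ofSubtype_subtypePerm _ fun _ => id]
  have hfix : #{y | a y = y} = 0 :=
    card_eq_zero.2 <| filter_eq_empty_iff.2 fun y _ hy => y.2 (congr_arg Subtype.val hy)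
  rw [numCycles, hcycleType, hc.cycleType, hfix, Multiset.card_singleton]

theorem sum_two_pow_numCycles_filter_mem_cycleFactorsFinset {c : Perm α} (hc : c.IsCycle) :
    ∑ π : Perm α with c ∈ π.cycleFactorsFinset, 2 ^ π.numCycles =
      2 * (Fintype.card α - #c.support + 1)! := by
  rw [sum_two_pow_numCycles_filter (c.subtypePerm (p := fun x => c x ≠ x)
      fun _ => c.injective.ne_iff) _
      fun π => by simp [mem_cycleFactorsFinset_iff, hc, eq_comm],
    hc.numCycles_subtypePerm, Fintype.card_subtype_compl, Fintype.card_subtype, pow_one]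
  rfl

theorem sum_card_fixedPoints_mul_two_pow_numCycles :
    ∑ π : Perm α, #{x | π x = x} * 2 ^ π.numCycles =
      2 * (Fintype.card α * (Fintype.card α - 1 + 1)!) := by
  rw [sum_card_filter_mul_eq_sum_sum_filter univ fun (π : Perm α) x => π x = x]
  simp only [sum_two_pow_numCycles_filter_apply_eq_self, sum_const, Finset.card_univ, smul_eq_mul]
  ring

theorem card_filter_cycleType_eq_singleton {k : ℕ} (hk : 2 ≤ k) :
    #{c : Perm α | c.cycleType = {k}} = (k - 1)! * (Fintype.card α).choose k := by
  by_cases hkα : k ≤ Fintype.card α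
  · exact card_of_cycleType_singleton hk hkα
  · rw [card_of_cycleType, if_neg (by simp [hkα]), choose_eq_zero_of_lt (not_le.1 hkα), mul_zero]

theorem count_cycleType_eq_card_filter (k : ℕ) (π : Perm α) :
    π.cycleType.count k =
      #{c ∈ ({c | c.cycleType = {k}} : Finset (Perm α)) | c ∈ π.cycleFactorsFinset} := by
  have hfilter : {c ∈ ({c | c.cycleType = {k}} : Finset (Perm α)) | c ∈ π.cycleFactorsFinset} =
      {c ∈ π.cycleFactorsFinset | k = #c.support} := by
    ext c
    simp only [mem_filter, mem_univ, true_and]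
    refine ⟨fun ⟨hk, hc⟩ => ⟨hc, ?_⟩, fun ⟨hc, hk⟩ => ⟨?_, hc⟩⟩
    · simpa [(mem_cycleFactorsFinset_iff.1 hc).1.cycleType, eq_comm] using hk
    · rw [(mem_cycleFactorsFinset_iff.1 hc).1.cycleType, hk]
  rw [hfilter, cycleType_def, Multiset.count_map]
  rfl

theorem sum_count_cycleType_mul_two_pow_numCycles {k : ℕ} (hk : 2 ≤ k) :
    ∑ π : Perm α, π.cycleType.count k * 2 ^ π.numCycles =
      2 * (k - 1)! * ((Fintype.card α).choose k * (Fintype.card α - k + 1)!) := by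
  have hfiber (c : Perm α) (hc : c ∈ ({c | c.cycleType = {k}} : Finset (Perm α))) :
      ∑ π : Perm α with c ∈ π.cycleFactorsFinset, 2 ^ π.numCycles =
        2 * (Fintype.card α - k + 1)! := by
    have hc : c.cycleType = {k} := (mem_filter.1 hc).2
    have hcycle : c.IsCycle := card_cycleType_eq_one.1 (by simp [hc])
    have hsupport : #c.support = k := by simp [← sum_cycleType, hc]
    rw [sum_two_pow_numCycles_filter_mem_cycleFactorsFinset hcycle, hsupport]
  simp_rw [count_cycleType_eq_card_filter]
  rw [sum_card_filter_mul_eq_sum_sum_filter, sum_congr rfl hfiber, sum_const, smul_eq_mul,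
    card_filter_cycleType_eq_singleton hk]
  ring

end Equiv.Perm

open Equiv Perm

theorem cycTotal_eq_numCycles {m : ℕ} (π : Perm (Fin m)) : cycTotal π = π.numCycles := rfl

theorem sum_cycCount_mul_two_pow_cycTotal {m k : ℕ} (hk : 1 ≤ k) :
    ∑ π : Perm (Fin m), cycCount k π * 2 ^ cycTotal π =
      2 * (k - 1)! * (m.choose k * (m - k + 1)!) := by
  obtain rfl | hk := hk.eq_or_lt
  · simpa [cycCount, cycTotal_eq_numCycles] using
      sum_card_fixedPoints_mul_two_pow_numCycles (α := Fin m)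
  · simpa [cycCount, cycTotal_eq_numCycles, hk.ne'] using
      sum_count_cycleType_mul_two_pow_numCycles (α := Fin m) hk

theorem sum_product_cycCount_two_pow_general (r : ℕ) (lam : Fin r → ℕ)
    (k : ℕ) (hk : 1 ≤ k) :
    ∑ g : (∀ i : Fin r, Equiv.Perm (Fin (lam i))),
        (∑ i, cycCount k (g i)) * 2 ^ (∑ i, cycTotal (g i)) =
      2 * (k - 1).factorial *
        ∑ i ∈ Finset.univ.filter (fun i : Fin r => k ≤ lam i),
          (lam i).choose k * (lam i - k + 1).factorial *
            ∏ j ∈ Finset.univ.erase i, (lam j + 1).factorial := by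
  calc _ = ∑ g : ∀ i, Perm (Fin (lam i)), (∑ i, cycCount k (g i)) * ∏ i, 2 ^ cycTotal (g i) := by
          simp_rw [prod_pow_eq_pow_sum]
    _ = ∑ i, (∑ π : Perm (Fin (lam i)), cycCount k π * 2 ^ cycTotal π) *
          ∏ j ∈ univ.erase i, ∑ π : Perm (Fin (lam j)), 2 ^ cycTotal π :=
        sum_pi_sum_mul_prod (fun _ π => cycCount k π) (fun _ π => 2 ^ cycTotal π)
    _ = _ := by
      simp_rw [sum_cycCount_mul_two_pow_cycTotal hk, cycTotal_eq_numCycles, sum_two_pow_numCycles,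
        Fintype.card_fin, mul_sum]
      rw [sum_filter_of_ne fun i _ h => not_lt.1 fun hlt => h (by simp [choose_eq_zero_of_lt hlt])]
      exact sum_congr rfl fun _ _ => by ring

/-- For positive integers `λ₁, …, λ_r` and `k ≥ 1`, summing over the product group
`T = ∏ᵢ Perm(Fin λᵢ)`:
`∑_{g∈T} αₖ(g) 2^{α(g)} = 2 (k-1)! ∑_{i : λᵢ ≥ k} C(λᵢ,k) (λᵢ-k+1)! ∏_{j≠i} (λⱼ+1)!`,
where `αₖ(g) = ∑ᵢ αₖ(gᵢ)` and `α(g) = ∑ᵢ α(gᵢ)`. -/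
theorem sum_product_cycCount_two_pow (r : ℕ) (lam : Fin r → ℕ) (hpos : ∀ i, 1 ≤ lam i)
    (k : ℕ) (hk : 1 ≤ k) :
    ∑ g : (∀ i : Fin r, Equiv.Perm (Fin (lam i))),
        (∑ i, cycCount k (g i)) * 2 ^ (∑ i, cycTotal (g i)) =
      2 * (k - 1).factorial *
        ∑ i ∈ Finset.univ.filter (fun i : Fin r => k ≤ lam i),
          (lam i).choose k * (lam i - k + 1).factorial *
            ∏ j ∈ Finset.univ.erase i, (lam j + 1).factorial :=
  sum_product_cycCount_two_pow_general r lam k hk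
end

section
/- Let λ = (λ_1, …, λ_r) be a pre-diagram and let δ be a pre-diagram obtained from λ by a finite (possibly empty) sequence of moves, such that no move is applicable to δ. Then: (1) the multiset of hook numbers of δ equals the multiset of hook numbers of λ; and (2) δ is nonincreasing (i.e. a Young diagram) if and only if the hook numbers λ^{(1)}, …, λ^{(r)} of λ are pairwise distinct. -/
/-- A pre-diagram: a finite sequence of nonnegative integers whose last entry is nonzero
and which has at most one ascent (index `i` with `λ_{i+1} > λ_i`). -/
def IsPreDiagram (l : List ℕ) : Prop :=
  (∀ h : l ≠ [], l.getLast h ≠ 0) ∧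
    (List.range (l.length - 1)).countP
      (fun i => decide (l.getD i 0 < l.getD (i + 1) 0)) ≤ 1

/-- The move `R_j` (0-indexed: acting on positions `j, j+1`) is applicable. -/
def MoveApplicable (l : List ℕ) (j : ℕ) : Prop :=
  j + 1 < l.length ∧ l.getD j 0 + 2 ≤ l.getD (j + 1) 0

/-- The result of applying the move `R_j`: the pair `(λ_j, λ_{j+1})` is replaced by
`(λ_{j+1} - 1, λ_j + 1)`. -/
def applyMove (l : List ℕ) (j : ℕ) : List ℕ :=
  (l.set j (l.getD (j + 1) 0 - 1)).set (j + 1) (l.getD j 0 + 1)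

/-- `l'` is obtained from `l` by one applicable move. -/
def MoveRel (l l' : List ℕ) : Prop := ∃ j, MoveApplicable l j ∧ l' = applyMove l j

/-- The hook numbers `λ^{(i)} = λ_i + r − i`, `1 ≤ i ≤ r`, of a pre-diagram of length `r`. -/
def hooksList (l : List ℕ) : List ℕ :=
  (List.range l.length).map fun idx => l.getD idx 0 + (l.length - 1 - idx)

/-!
A move `R_j` changes the hook numbers only by exchanging those at positions `j` and `j + 1`,
so the multiset of hook numbers is invariant. Consecutive hook numbers differ by
`λ_i - λ_{i+1} + 1`; hence `λ` is nonincreasing iff its hook numbers strictly decrease, and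
no move applies iff they weakly decrease. For a weakly decreasing list, strictly decreasing
is the same as having no repeated entry.
-/

lemma length_hooksList (l : List ℕ) : (hooksList l).length = l.length := by
  simp [hooksList]

lemma getElem_hooksList (l : List ℕ) (i : ℕ) (h : i < (hooksList l).length) :
    (hooksList l)[i] = l.getD i 0 + (l.length - 1 - i) := by
  simp [hooksList]

lemma length_applyMove (l : List ℕ) (j : ℕ) : (applyMove l j).length = l.length := by
  simp [applyMove]

lemma getD_applyMove {l : List ℕ} {j i : ℕ} (hi : i < l.length) :
    (applyMove l j).getD i 0 =
      if i = j + 1 then l.getD j 0 + 1 else if i = j then l.getD (j + 1) 0 - 1 else l.getD i 0 := by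
  rw [List.getD_eq_getElem _ 0 (by rwa [length_applyMove]), List.getD_eq_getElem _ 0 hi]
  simp only [applyMove, List.getElem_set]
  split_ifs <;> first | rfl | omega

/-- The truncated subtraction `λ_{j+1} - 1` in `applyMove` is harmless since `λ_{j+1} ≥ 2`. -/
lemma hooksList_applyMove {l : List ℕ} {j : ℕ} (h : MoveApplicable l j) :
    hooksList (applyMove l j) = (hooksList l).swap j (j + 1) := by
  obtain ⟨hj, hle⟩ := h
  apply List.ext_getElem
  · simp [length_hooksList, length_applyMove]
  intro i h₁ h₂
  have hi : i < l.length := by simpa [length_hooksList, length_applyMove] using h₁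
  simp only [List.getElem_swap, getElem_hooksList, getD_applyMove hi, length_applyMove,
    length_hooksList]
  split_ifs <;> omega

lemma hooksList_perm_of_moveRel {l l' : List ℕ} (h : MoveRel l l') :
    (hooksList l').Perm (hooksList l) := by
  obtain ⟨j, hj, rfl⟩ := h
  rw [hooksList_applyMove hj]
  exact List.swap_perm _ _ _

lemma hooksList_perm_of_reflTransGen {l d : List ℕ} (h : Relation.ReflTransGen MoveRel l d) :
    (hooksList d).Perm (hooksList l) := by
  induction h with
  | refl => rfl
  | tail _ hmove ih => exact (hooksList_perm_of_moveRel hmove).trans ih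

lemma sortedGE_iff_sortedGT_hooksList (l : List ℕ) :
    l.SortedGE ↔ (hooksList l).SortedGT := by
  simp only [List.sortedGE_iff_isChain, List.sortedGT_iff_isChain, List.isChain_iff_getElem,
    length_hooksList, getElem_hooksList]
  refine forall₂_congr fun i hi => ?_
  rw [← List.getD_eq_getElem _ 0, ← List.getD_eq_getElem _ 0]
  omega

lemma sortedGE_hooksList_of_forall_not_moveApplicable {d : List ℕ}
    (hterm : ∀ j, ¬ MoveApplicable d j) : (hooksList d).SortedGE := by
  simp only [List.sortedGE_iff_isChain, List.isChain_iff_getElem, length_hooksList,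
    getElem_hooksList]
  intro i hi
  have := hterm i
  simp only [MoveApplicable, not_and, not_le] at this
  have := this hi
  omega

theorem wrapping_hooks_general (l d : List ℕ)
    (hsteps : Relation.ReflTransGen MoveRel l d)
    (hterm : ∀ j : ℕ, ¬ MoveApplicable d j) :
    (hooksList d : Multiset ℕ) = (hooksList l : Multiset ℕ) ∧
    (d.Pairwise (· ≥ ·) ↔ (hooksList l).Nodup) := by
  have hperm := hooksList_perm_of_reflTransGen hsteps
  refine ⟨Multiset.coe_eq_coe.mpr hperm, ?_⟩
  rw [← List.sortedGE_iff_pairwise, sortedGE_iff_sortedGT_hooksList,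
    List.sortedGT_iff_nodup_and_sortedGE, ← hperm.nodup_iff]
  exact and_iff_left (sortedGE_hooksList_of_forall_not_moveApplicable hterm)

/-- If `δ` is obtained from a pre-diagram `λ` by a finite sequence of moves and no move
applies to `δ`, then `δ` has the same multiset of hook numbers as `λ`, and `δ` is
nonincreasing (a Young diagram) iff the hook numbers of `λ` are pairwise distinct. -/
theorem wrapping_hooks (l d : List ℕ) (hl : IsPreDiagram l)
    (hsteps : Relation.ReflTransGen MoveRel l d)
    (hterm : ∀ j : ℕ, ¬ MoveApplicable d j) :
    (hooksList d : Multiset ℕ) = (hooksList l : Multiset ℕ) ∧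
    (d.Pairwise (· ≥ ·) ↔ (hooksList l).Nodup) :=
  wrapping_hooks_general l d hsteps hterm
end

section
/- For every real τ with 0 < τ < 2, the function μ_τ is strictly decreasing on the interval [0, 1/2]. -/
/-!
`μ_τ'(β) = log β - log (1 - β) + τ (1 - 2β)`. Writing `t = 1 - 2β ∈ (0, 1)` for `β ∈ (0, 1/2)`,
`log (1 - β) - log β = log (1 + t) - log (1 - t) = 2 artanh t > 2t ≥ τ t`, the strict inequality
being the first term of the series `2 artanh t = 2 ∑ t^(2k+1) / (2k+1)` with positive terms.
-/

/-- `μ_τ(β) = β log β + (1−β) log(1−β) + τ β(1−β)`; since `Real.log 0 = 0` in Mathlib,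
this automatically satisfies the convention `μ_τ(0) = 0`. -/
noncomputable def muFun (τ β : ℝ) : ℝ :=
  β * Real.log β + (1 - β) * Real.log (1 - β) + τ * β * (1 - β)

open Real

lemma two_mul_lt_log_one_add_sub_log_one_sub {t : ℝ} (ht0 : 0 < t) (ht1 : t < 1) :
    2 * t < log (1 + t) - log (1 - t) := by
  have hseries := hasSum_log_sub_log_of_abs_lt_one (abs_lt.2 ⟨by linarith, ht1⟩)
  have hpartial := sum_le_hasSum (Finset.range 2) (fun k _ => by positivity) hseries
  norm_num [Finset.sum_range_succ] at hpartial
  have hcube : 0 < t ^ 3 := by positivity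
  linarith

lemma continuous_muFun (τ : ℝ) : Continuous (muFun τ) := by
  unfold muFun
  have hmulLog_one_sub : Continuous fun β : ℝ => (1 - β) * log (1 - β) :=
    continuous_mul_log.comp (continuous_const.sub continuous_id)
  fun_prop

lemma hasDerivAt_muFun (τ : ℝ) {β : ℝ} (hβ0 : β ≠ 0) (hβ1 : β ≠ 1) :
    HasDerivAt (muFun τ) (log β - log (1 - β) + τ * (1 - 2 * β)) β := by
  have hone_sub : HasDerivAt (fun β : ℝ => 1 - β) (-1) β := (hasDerivAt_id β).const_sub 1
  have hmulLog := hasDerivAt_mul_log hβ0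
  have hmulLog_one_sub := (hasDerivAt_mul_log (sub_ne_zero.2 hβ1.symm)).comp β hone_sub
  have hquad := ((hasDerivAt_id' β).const_mul τ).mul hone_sub
  refine ((hmulLog.add hmulLog_one_sub).add hquad).congr_deriv ?_
  ring

lemma deriv_muFun_neg {τ : ℝ} (hτ : τ < 2) {β : ℝ} (hβ0 : 0 < β) (hβ : β < 1 / 2) :
    deriv (muFun τ) β < 0 := by
  rw [(hasDerivAt_muFun τ hβ0.ne' (by linarith)).deriv]
  have hlog_ratio : log (1 + (1 - 2 * β)) - log (1 - (1 - 2 * β)) = log (1 - β) - log β := by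
    rw [show 1 + (1 - 2 * β) = 2 * (1 - β) by ring, show 1 - (1 - 2 * β) = 2 * β by ring,
      log_mul two_ne_zero (by linarith), log_mul two_ne_zero hβ0.ne']
    ring
  have hartanh := two_mul_lt_log_one_add_sub_log_one_sub (t := 1 - 2 * β) (by linarith)
    (by linarith)
  have hτt : τ * (1 - 2 * β) ≤ 2 * (1 - 2 * β) :=
    mul_le_mul_of_nonneg_right hτ.le (by linarith)
  linarith

theorem muFun_strictAntiOn_general (τ : ℝ) (hτ2 : τ < 2) :
    StrictAntiOn (muFun τ) (Set.Icc (0 : ℝ) (1 / 2)) := by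
  refine strictAntiOn_of_deriv_neg (convex_Icc _ _) (continuous_muFun τ).continuousOn ?_
  intro β hβ
  rw [interior_Icc] at hβ
  exact deriv_muFun_neg hτ2 hβ.1 hβ.2

/-- For `0 < τ < 2`, the function `μ_τ` is strictly decreasing on `[0, 1/2]`. -/
theorem muFun_strictAntiOn (τ : ℝ) (hτ0 : 0 < τ) (hτ2 : τ < 2) :
    StrictAntiOn (muFun τ) (Set.Icc (0 : ℝ) (1 / 2)) :=
  muFun_strictAntiOn_general τ hτ2
end
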